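/- Let N ≥ 1, T ≥ 1, H ≥ 1 be natural numbers, h : Fin N → ℝ a synthesis window with max_{m < N} |h(m)| ≤ 1, and suppose two spectrograms S₁, S₂ : Fin T → Fin N → ℂ satisfy (Σ_{t < T} Σ_{k < N} |S₁(t,k) − S₂(t,k)|²)^{1/2} ≤ Δ. Then the overlap-add ISTFT signals x_{S₁}, x_{S₂} : ℤ → ℂ, defined by x_S(n) = Σ_{t < T} [if 0 ≤ n − tH < N then h(n − tH) · Σ_{k < N} S(t,k) · exp(2πi·k·(n − tH)/N) else 0], satisfy (Σ_{n ∈ ℤ} |x_{S₁}(n) − x_{S₂}(n)|²)^{1/2} ≤ √(N·T) · Δ. -/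

import Mathlib

/-!
Each frame of the overlap-add signal is a translate of the windowed inverse DFT of one row of
the spectrogram. By Parseval for the unnormalized DFT (orthogonality of the characters of
`ZMod N`) and `|h| ≤ 1`, a frame has ℓ²(ℤ)-norm at most `√N` times the ℓ²-norm of its row.
The ISTFT is linear, so the triangle inequality in `ℓ²(ℤ)` followed by Cauchy–Schwarz over the
`T` frames bounds its Lipschitz constant by `√(N T)`.
-/

open Complex Real

/-- Overlap-add ISTFT: given a spectrogram `S : Fin T → Fin N → ℂ` (T frames, N bins)
with hop size `H` and synthesis window `h : Fin N → ℝ`, the reconstructed signal at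
time `n ∈ ℤ` is the sum over frames of the windowed, shifted unnormalized inverse DFT:
`x_S(n) = Σ_{t<T} [if 0 ≤ n − tH < N then h(n−tH) · Σ_{k<N} S(t,k)·exp(2πi·k·(n−tH)/N) else 0]`. -/
noncomputable def olaISTFT (N T H : ℕ) (h : Fin N → ℝ)
    (S : Fin T → Fin N → ℂ) (n : ℤ) : ℂ :=
  ∑ t : Fin T,
    if hc : 0 ≤ n - (t : ℤ) * H ∧ n - (t : ℤ) * H < N then
      (h ⟨(n - (t : ℤ) * H).toNat, by omega⟩ : ℂ) *
        ∑ k : Fin N, S t k *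
          Complex.exp (2 * Real.pi * Complex.I * (k : ℕ) * ((n - (t : ℤ) * H) : ℤ) / N)
    else 0

open ComplexConjugate

lemma ZMod.natCast_fin_bijective (N : ℕ) [NeZero N] :
    Function.Bijective (fun m : Fin N => ((m : ℕ) : ZMod N)) := by
  rw [Fintype.bijective_iff_injective_and_card, ZMod.card, Fintype.card_fin]
  refine ⟨fun a b hab => Fin.ext ?_, rfl⟩
  simpa [ZMod.natCast_eq_natCast_iff', Nat.mod_eq_of_lt a.isLt, Nat.mod_eq_of_lt b.isLt] using hab

section DFT

variable {N : ℕ}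

noncomputable def idft (N : ℕ) (c : Fin N → ℂ) (m : ℤ) : ℂ :=
  ∑ k : Fin N, c k * exp (2 * π * I * (k : ℕ) * m / N)

lemma idft_sub (c d : Fin N → ℂ) (m : ℤ) : idft N (c - d) m = idft N c m - idft N d m := by
  simp only [idft, Pi.sub_apply, sub_mul, Finset.sum_sub_distrib]

lemma exp_eq_stdAddChar [NeZero N] (k : ℕ) (m : ℤ) :
    exp (2 * π * I * k * m / N) = ZMod.stdAddChar ((k * m : ℤ) : ZMod N) := by
  rw [ZMod.stdAddChar_coe]
  push_cast
  ring_nf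

lemma sum_exp_mul_conj_exp [NeZero N] (k j : Fin N) :
    ∑ m : Fin N, exp (2 * π * I * (k : ℕ) * ((m : ℕ) : ℤ) / N) *
        conj (exp (2 * π * I * (j : ℕ) * ((m : ℕ) : ℤ) / N)) = if k = j then (N : ℂ) else 0 := by
  have hterm : ∀ m : Fin N, exp (2 * π * I * (k : ℕ) * ((m : ℕ) : ℤ) / N) *
      conj (exp (2 * π * I * (j : ℕ) * ((m : ℕ) : ℤ) / N)) =
        ZMod.stdAddChar (((m : ℕ) : ZMod N) * (((k : ℕ) : ZMod N) - ((j : ℕ) : ZMod N))) := by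
    intro m
    rw [exp_eq_stdAddChar, exp_eq_stdAddChar, ← AddChar.map_neg_eq_conj,
      ← AddChar.map_add_eq_mul]
    congr 1
    push_cast
    ring
  simp_rw [hterm]
  rw [(ZMod.natCast_fin_bijective N).sum_comp (fun x => ZMod.stdAddChar (x * _)),
    AddChar.sum_mulShift _ (ZMod.isPrimitive_stdAddChar N)]
  simp [sub_eq_zero, (ZMod.natCast_fin_bijective N).injective.eq_iff]

theorem sum_norm_sq_idft (c : Fin N → ℂ) :
    ∑ m : Fin N, ‖idft N c (m : ℕ)‖ ^ 2 = N * ∑ k, ‖c k‖ ^ 2 := by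
  rcases eq_or_ne N 0 with rfl | hN
  · simp
  have : NeZero N := ⟨hN⟩
  apply Complex.ofReal_injective
  push_cast
  simp_rw [← Complex.mul_conj', idft, map_sum, map_mul, Finset.sum_mul_sum, Finset.mul_sum]
  calc _ = ∑ k, ∑ j, c k * conj (c j) * ∑ m : Fin N,
        exp (2 * π * I * (k : ℕ) * ((m : ℕ) : ℤ) / N) *
          conj (exp (2 * π * I * (j : ℕ) * ((m : ℕ) : ℤ) / N)) := by
        rw [Finset.sum_comm]
        refine Finset.sum_congr rfl fun k _ => ?_
        rw [Finset.sum_comm]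
        refine Finset.sum_congr rfl fun j _ => ?_
        rw [Finset.mul_sum]
        exact Finset.sum_congr rfl fun m _ => by ring
    _ = _ := by
        simp only [sum_exp_mul_conj_exp, mul_ite, mul_zero, Finset.sum_ite_eq, Finset.mem_univ,
          if_true]
        exact Finset.sum_congr rfl fun k _ => by ring

end DFT

lemma lp.norm_eq_sqrt_tsum_norm_sq {ι : Type*} {E : ι → Type*} [∀ i, NormedAddCommGroup (E i)]
    (f : lp E 2) : ‖f‖ = √(∑' i, ‖f i‖ ^ 2) := by
  rw [lp.norm_eq_tsum_rpow (by norm_num), Real.sqrt_eq_rpow]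
  simp

section Frame

variable {N : ℕ} {h : Fin N → ℝ}

noncomputable def windowedIDFT (N : ℕ) (h : Fin N → ℝ) (c : Fin N → ℂ) (m : ℤ) : ℂ :=
  if hm : 0 ≤ m ∧ m < N then (h ⟨m.toNat, by omega⟩ : ℂ) * idft N c m else 0

lemma windowedIDFT_sub (c d : Fin N → ℂ) (m : ℤ) :
    windowedIDFT N h (c - d) m = windowedIDFT N h c m - windowedIDFT N h d m := by
  unfold windowedIDFT
  split_ifs <;> simp only [idft_sub, mul_sub, sub_zero]

lemma windowedIDFT_natCast (c : Fin N → ℂ) (m : Fin N) :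
    windowedIDFT N h c (m : ℕ) = h m * idft N c (m : ℕ) := by
  rw [windowedIDFT, dif_pos ⟨by positivity, by exact_mod_cast m.isLt⟩]
  simp

lemma support_windowedIDFT_subset (c : Fin N → ℂ) :
    Function.support (windowedIDFT N h c) ⊆ Set.range (fun m : Fin N => ((m : ℕ) : ℤ)) := by
  intro m hm
  by_cases hmN : 0 ≤ m ∧ m < N
  · exact ⟨⟨m.toNat, by omega⟩, by simp [hmN.1]⟩
  · exact absurd (dif_neg hmN) hm

lemma tsum_norm_sq_windowedIDFT_le (hwin : ∀ m, |h m| ≤ 1) (c : Fin N → ℂ) :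
    ∑' m : ℤ, ‖windowedIDFT N h c m‖ ^ 2 ≤ N * ∑ k, ‖c k‖ ^ 2 := by
  have hsupp : Function.support (fun m => ‖windowedIDFT N h c m‖ ^ 2) ⊆
      Set.range (fun m : Fin N => ((m : ℕ) : ℤ)) :=
    (Function.support_comp_subset (g := fun z : ℂ => ‖z‖ ^ 2) (by simp) _).trans
      (support_windowedIDFT_subset c)
  rw [← (Nat.cast_injective.comp Fin.val_injective).tsum_eq hsupp, tsum_fintype,
    ← sum_norm_sq_idft]
  gcongr with m
  rw [Function.comp_apply, windowedIDFT_natCast, norm_mul, norm_real, Real.norm_eq_abs]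
  exact mul_le_of_le_one_left (norm_nonneg _) (hwin m)

lemma memℓp_windowedIDFT_comp_sub (c : Fin N → ℂ) (a : ℤ) :
    Memℓp (fun n => windowedIDFT N h c (n - a)) 2 := by
  refine (memℓp_zero ?_).of_exponent_ge (by norm_num)
  exact ((Set.finite_range _).subset (support_windowedIDFT_subset c)).preimage
    (sub_left_injective.injOn)

end Frame

lemma olaISTFT_eq_sum_windowedIDFT (N T H : ℕ) (h : Fin N → ℝ) (S : Fin T → Fin N → ℂ) (n : ℤ) :
    olaISTFT N T H h S n = ∑ t : Fin T, windowedIDFT N h (S t) (n - t * H) :=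
  rfl

lemma olaISTFT_sub (N T H : ℕ) (h : Fin N → ℝ) (S₁ S₂ : Fin T → Fin N → ℂ) (n : ℤ) :
    olaISTFT N T H h (S₁ - S₂) n = olaISTFT N T H h S₁ n - olaISTFT N T H h S₂ n := by
  simp only [olaISTFT_eq_sum_windowedIDFT, Pi.sub_apply, windowedIDFT_sub,
    Finset.sum_sub_distrib]

theorem sqrt_tsum_norm_sq_olaISTFT_le {N T : ℕ} (H : ℕ) {h : Fin N → ℝ}
    (hwin : ∀ m, |h m| ≤ 1) (S : Fin T → Fin N → ℂ) :
    √(∑' n : ℤ, ‖olaISTFT N T H h S n‖ ^ 2) ≤ √(N * T) * √(∑ t, ∑ k, ‖S t k‖ ^ 2) := by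
  let frame : Fin T → lp (fun _ : ℤ => ℂ) 2 := fun t =>
    ⟨fun n => windowedIDFT N h (S t) (n - t * H), memℓp_windowedIDFT_comp_sub _ _⟩
  have hframe : ∀ t, ‖frame t‖ ≤ √N * √(∑ k, ‖S t k‖ ^ 2) := fun t => by
    rw [lp.norm_eq_sqrt_tsum_norm_sq, ← Real.sqrt_mul (Nat.cast_nonneg N)]
    exact Real.sqrt_le_sqrt <| ((Equiv.subRight _).tsum_eq
      (fun m => ‖windowedIDFT N h (S t) m‖ ^ 2)).trans_le (tsum_norm_sq_windowedIDFT_le hwin _)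
  have hsum : ⇑(∑ t, frame t) = olaISTFT N T H h S := by
    ext n
    rw [lp.coeFn_sum, Finset.sum_apply, olaISTFT_eq_sum_windowedIDFT]
  calc √(∑' n : ℤ, ‖olaISTFT N T H h S n‖ ^ 2) = ‖∑ t, frame t‖ := by
        rw [lp.norm_eq_sqrt_tsum_norm_sq, hsum]
    _ ≤ ∑ t, ‖frame t‖ := norm_sum_le _ _
    _ ≤ √N * ∑ t, √(∑ k, ‖S t k‖ ^ 2) := by
        rw [Finset.mul_sum]
        exact Finset.sum_le_sum fun t _ => hframe t
    _ ≤ √N * (√T * √(∑ t, ∑ k, ‖S t k‖ ^ 2)) := by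
        gcongr
        simpa using Real.sum_sqrt_mul_sqrt_le Finset.univ (fun _ => zero_le_one)
          (fun t => Finset.sum_nonneg fun k _ => sq_nonneg ‖S t k‖)
    _ = √(N * T) * √(∑ t, ∑ k, ‖S t k‖ ^ 2) := by
        rw [← mul_assoc, ← Real.sqrt_mul (Nat.cast_nonneg N)]

theorem istft_bounded_error_general (N T H : ℕ)
    (h : Fin N → ℝ) (hwin : ∀ m : Fin N, |h m| ≤ 1)
    (S₁ S₂ : Fin T → Fin N → ℂ) (Δ : ℝ)
    (hS : Real.sqrt (∑ t : Fin T, ∑ k : Fin N, ‖S₁ t k - S₂ t k‖ ^ 2) ≤ Δ) :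
    Real.sqrt (∑' n : ℤ, ‖olaISTFT N T H h S₁ n - olaISTFT N T H h S₂ n‖ ^ 2) ≤
      Real.sqrt (N * T) * Δ := by
  simp_rw [← olaISTFT_sub]
  exact (sqrt_tsum_norm_sq_olaISTFT_le H hwin _).trans
    (mul_le_mul_of_nonneg_left hS (Real.sqrt_nonneg _))

/-- **Remark + Theorem 1 combined.** If the synthesis window satisfies `‖h‖_∞ ≤ 1`
(e.g. a canonical Hann window) and two spectrograms differ by at most `Δ` in
entrywise ℓ² norm, then the overlap-add ISTFT signals differ by at most
`√(N·T) · Δ` in ℓ² norm. -/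
theorem istft_bounded_error (N T H : ℕ) (hN : 1 ≤ N) (hT : 1 ≤ T) (hH : 1 ≤ H)
    (h : Fin N → ℝ) (hwin : ∀ m : Fin N, |h m| ≤ 1)
    (S₁ S₂ : Fin T → Fin N → ℂ) (Δ : ℝ)
    (hS : Real.sqrt (∑ t : Fin T, ∑ k : Fin N, ‖S₁ t k - S₂ t k‖ ^ 2) ≤ Δ) :
    Real.sqrt (∑' n : ℤ, ‖olaISTFT N T H h S₁ n - olaISTFT N T H h S₂ n‖ ^ 2) ≤
      Real.sqrt (N * T) * Δ :=
  istft_bounded_error_general N T H h hwin S₁ S₂ Δ hS
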